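/- arXiv:2402.18782 — 7 statements merged into one kernel-verified Lean document; each statement's English description precedes it below -/
import Mathlib

section
/- For any integer n ≥ 5, let M = R((n-2)π/n) · S where R(θ) is the 2×2 rotation matrix by angle θ and S = [[1, 4·cot(2π/n)],[0,1]]. Then Mⁿ = Id. -/
open Real Matrix

/-- Rotation matrix by angle `θ`. -/
noncomputable def rotMat (θ : ℝ) : Matrix (Fin 2) (Fin 2) ℝ :=
  !![Real.cos θ, -Real.sin θ; Real.sin θ, Real.cos θ]

private lemma aux_sq (α : ℝ) (hs : Real.sin α ≠ 0) :
    (!![-Real.cos α, -(4*(Real.cos α)^2+(Real.sin α)^2)/Real.sin α;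
        Real.sin α, 3*Real.cos α] : Matrix (Fin 2) (Fin 2) ℝ) *
      !![-Real.cos α, -(4*(Real.cos α)^2+(Real.sin α)^2)/Real.sin α;
        Real.sin α, 3*Real.cos α]
    = (2*Real.cos α) • !![-Real.cos α, -(4*(Real.cos α)^2+(Real.sin α)^2)/Real.sin α;
        Real.sin α, 3*Real.cos α] - 1 := by
  have h1 : (Real.cos α)^2 + (Real.sin α)^2 = 1 := by
    rw [add_comm]; exact Real.sin_sq_add_cos_sq α
  ext i j
  fin_cases i <;> fin_cases j <;>
    (try simp [Matrix.mul_apply, Fin.sum_univ_succ, Matrix.one_apply]) <;>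
    (try field_simp) <;> nlinarith [h1]

private lemma aux_pow (α : ℝ) (hs : Real.sin α ≠ 0) (k : ℕ) :
    (!![-Real.cos α, -(4*(Real.cos α)^2+(Real.sin α)^2)/Real.sin α;
        Real.sin α, 3*Real.cos α] : Matrix (Fin 2) (Fin 2) ℝ) ^ k
    = (Real.sin (k*α)/Real.sin α) • !![-Real.cos α, -(4*(Real.cos α)^2+(Real.sin α)^2)/Real.sin α;
        Real.sin α, 3*Real.cos α]
      - (Real.sin (((k:ℝ)-1)*α)/Real.sin α) • 1 := by
  set M : Matrix (Fin 2) (Fin 2) ℝ :=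
    !![-Real.cos α, -(4*(Real.cos α)^2+(Real.sin α)^2)/Real.sin α;
        Real.sin α, 3*Real.cos α] with hM
  induction k with
  | zero =>
      simp [neg_one_mul, Real.sin_neg, neg_div, div_self hs]
  | succ k ih =>
      rw [pow_succ, ih, sub_mul, smul_mul_assoc, smul_mul_assoc, one_mul,
        aux_sq α hs, smul_sub, smul_smul]
      have h1 : Real.sin ((↑(k+1):ℝ)*α) = 2*Real.cos α * Real.sin (k*α) - Real.sin (((k:ℝ)-1)*α) := by
        push_cast
        have e1 : ((k:ℝ)+1)*α = k*α + α := by ring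
        have e2 : ((k:ℝ)-1)*α = k*α - α := by ring
        rw [e1, e2, Real.sin_add, Real.sin_sub]
        ring
      have h2 : (↑(k+1):ℝ) - 1 = (k:ℝ) := by push_cast; ring
      rw [h2, h1]
      have : Real.sin (↑k * α) / Real.sin α * (2 * Real.cos α)
          = (2 * Real.cos α * Real.sin (↑k * α) - Real.sin (((k:ℝ) - 1) * α)) / Real.sin α
            + Real.sin (((k:ℝ)-1)*α)/Real.sin α := by
        field_simp; ring
      rw [this]
      module

/-- For any `n ≥ 5`, the matrix `R((n-2)π/n) · [[1, 4·cot(2π/n)],[0,1]]` has order dividing `n`: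
its `n`-th power is the identity. -/
theorem rotation_shear_pow_eq_id (n : ℕ) (hn : 5 ≤ n) :
    (rotMat ((n - 2) * Real.pi / n) *
        !![1, 4 * (Real.cos (2 * Real.pi / n) / Real.sin (2 * Real.pi / n)); 0, 1]) ^ n = 1 := by
  have hn0 : (0:ℝ) < n := by positivity
  have hnR : (n:ℝ) ≠ 0 := ne_of_gt hn0
  set α : ℝ := 2 * Real.pi / n with hα
  have hαpos : 0 < α := by positivity
  have hαlt : α < Real.pi := by
    rw [hα, div_lt_iff₀ hn0]
    have : (2:ℝ) < n := by exact_mod_cast (by omega : 2 < n)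
    nlinarith [Real.pi_pos]
  have hs : Real.sin α ≠ 0 := ne_of_gt (Real.sin_pos_of_pos_of_lt_pi hαpos hαlt)
  have hθ : ((n:ℝ) - 2) * Real.pi / n = Real.pi - α := by
    rw [hα]; field_simp
  have hcos : Real.cos (((n:ℝ) - 2) * Real.pi / n) = -Real.cos α := by
    rw [hθ, Real.cos_pi_sub]
  have hsin : Real.sin (((n:ℝ) - 2) * Real.pi / n) = Real.sin α := by
    rw [hθ, Real.sin_pi_sub]
  have hprod : rotMat ((n - 2) * Real.pi / n) *
        !![1, 4 * (Real.cos (2 * Real.pi / n) / Real.sin (2 * Real.pi / n)); 0, 1]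
      = !![-Real.cos α, -(4*(Real.cos α)^2+(Real.sin α)^2)/Real.sin α;
          Real.sin α, 3*Real.cos α] := by
    rw [rotMat, hcos, hsin]
    ext i j
    fin_cases i <;> fin_cases j <;>
      (try simp [Matrix.mul_apply, Fin.sum_univ_succ, ← hα]) <;>
      (try field_simp) <;> (try ring)
  rw [hprod, aux_pow α hs n]
  have h1 : (n:ℝ) * α = 2 * Real.pi := by rw [hα]; field_simp
  have h2 : ((n:ℝ) - 1) * α = 2 * Real.pi - α := by
    rw [sub_one_mul, h1]
  rw [h1, h2, Real.sin_two_pi, Real.sin_sub, Real.sin_two_pi, Real.cos_two_pi]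
  simp [neg_div, div_self hs]
end

section
/- For n = 8 specifically: (R(3π/4) · [[1,4],[0,1]])⁸ = Id, where R(3π/4) is the rotation matrix by angle 3π/4. -/
open Real Matrix

/-- `(R(3π/4) · [[1,4],[0,1]])⁸ = Id`. -/
theorem rotation_shear_pow_eight_eq_id :
    (rotMat (3 * Real.pi / 4) * !![1, 4; 0, 1]) ^ 8 = 1 := by
  have hc : Real.cos (3 * Real.pi / 4) = -(Real.sqrt 2 / 2) := by
    rw [show (3 * Real.pi / 4 : ℝ) = Real.pi - Real.pi / 4 by ring, Real.cos_pi_sub,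
      Real.cos_pi_div_four]
  have hs : Real.sin (3 * Real.pi / 4) = Real.sqrt 2 / 2 := by
    rw [show (3 * Real.pi / 4 : ℝ) = Real.pi - Real.pi / 4 by ring, Real.sin_pi_sub,
      Real.sin_pi_div_four]
  have hsq : Real.sqrt 2 * Real.sqrt 2 = 2 :=
    Real.mul_self_sqrt (by norm_num)
  set M := rotMat (3 * Real.pi / 4) * !![1, 4; 0, 1] with hM
  have h2 : M ^ 2 = !![(-2 : ℝ), -5; 1, 2] := by
    rw [hM, pow_two, rotMat, hc, hs]
    ext i j
    fin_cases i <;> fin_cases j <;>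
      simp [Matrix.mul_apply, Fin.sum_univ_succ] <;> nlinarith [hsq]
  have h4 : M ^ 4 = -1 := by
    rw [show (4 : ℕ) = 2 * 2 by rfl, pow_mul, h2]
    ext i j
    fin_cases i <;> fin_cases j <;>
      simp [pow_two, Matrix.mul_apply, Fin.sum_univ_succ, Matrix.one_apply] <;> norm_num
  rw [show (8 : ℕ) = 4 * 2 by rfl, pow_mul, h4]
  simp
end

section
/- Let X ⊂ ℝ² be a strictly convex body with 0 ∈ ∂X, and let v₁, v₂ be linearly independent with v₁, v₂, v₁+v₂ ∈ ∂X. Suppose w lies in the open cone {a·v₁ + b·v₂ : a, b > 0} and w ∈ ∂X with w ≠ v₁ + v₂. Then exactly one of the coordinates of w in the basis (v₁, v₂) is greater than 1 and the other lies strictly between 0 and 1. -/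
/-!
Inside the parallelogram `0, v₁, v₁ + v₂, v₂`, every point `α • v₁ + β • v₂` with
`0 < α, β ≤ 1` other than the corner `v₁ + v₂` is an interior point of `X`: it is a convex
combination of `0` with a point of one of the open chords `(v₁, v₁ + v₂)`, `(0, v₁ + v₂)`,
`(v₂, v₁ + v₂)`, and these chords lie in the interior by strict convexity. Conversely, if both
coordinates of `w` are at least `1`, then the corner `v₁ + v₂` lies on the open segment from
such an interior point to `w`, so `w` cannot be in the closure of `X`, as `v₁ + v₂` is a
boundary point.
-/

section

variable {E : Type*} [AddCommGroup E] [Module ℝ E] [TopologicalSpace E]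
  [IsTopologicalAddGroup E] [ContinuousConstSMul ℝ E] {X : Set E} {v₁ v₂ : E}

theorem smul_add_smul_mem_interior_of_le_of_lt_one (hXconv : Convex ℝ X)
    (hXstrict : ∀ p ∈ frontier X, ∀ q ∈ frontier X, p ≠ q → openSegment ℝ p q ⊆ interior X)
    (hv₂0 : v₂ ≠ 0) (hv₁₂0 : v₁ + v₂ ≠ 0) (h0 : (0 : E) ∈ frontier X)
    (hv₁ : v₁ ∈ frontier X) (hv₁₂ : v₁ + v₂ ∈ frontier X)
    {α β : ℝ} (hβ : 0 < β) (hβα : β ≤ α) (hα1 : α ≤ 1) (hβ1 : β < 1) :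
    α • v₁ + β • v₂ ∈ interior X := by
  rcases hβα.eq_or_lt with rfl | hβα
  · exact hXstrict 0 h0 (v₁ + v₂) hv₁₂ hv₁₂0.symm
      ⟨1 - β, β, by linarith, hβ, by ring, by rw [smul_zero, zero_add, smul_add]⟩
  · have hα : 0 < α := hβ.trans hβα
    have hchord : (1 - β / α) • v₁ + (β / α) • (v₁ + v₂) ∈ interior X :=
      hXstrict v₁ hv₁ (v₁ + v₂) hv₁₂ (by simpa using hv₂0)
        ⟨1 - β / α, β / α, by linarith [(div_lt_one hα).2 hβα], div_pos hβ hα, by ring, rfl⟩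
    have hcombo := hXconv.combo_interior_closure_mem_interior hchord
      (frontier_subset_closure h0) hα (by linarith : (0 : ℝ) ≤ 1 - α) (by ring)
    convert hcombo using 1
    match_scalars <;> field_simp; ring

theorem smul_add_smul_mem_interior (hXconv : Convex ℝ X)
    (hXstrict : ∀ p ∈ frontier X, ∀ q ∈ frontier X, p ≠ q → openSegment ℝ p q ⊆ interior X)
    (hv₁0 : v₁ ≠ 0) (hv₂0 : v₂ ≠ 0) (hv₁₂0 : v₁ + v₂ ≠ 0) (h0 : (0 : E) ∈ frontier X)
    (hv₁ : v₁ ∈ frontier X) (hv₂ : v₂ ∈ frontier X) (hv₁₂ : v₁ + v₂ ∈ frontier X)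
    {α β : ℝ} (hα : 0 < α) (hβ : 0 < β) (hα1 : α ≤ 1) (hβ1 : β ≤ 1) (hne : (α, β) ≠ (1, 1)) :
    α • v₁ + β • v₂ ∈ interior X := by
  rcases le_total β α with hβα | hαβ
  · have hβ1 : β < 1 := hβ1.lt_of_ne fun h => hne (by rw [h, le_antisymm hα1 (h ▸ hβα)])
    exact smul_add_smul_mem_interior_of_le_of_lt_one hXconv hXstrict hv₂0 hv₁₂0 h0 hv₁ hv₁₂
      hβ hβα hα1 hβ1
  · have hα1 : α < 1 := hα1.lt_of_ne fun h => hne (by rw [h, le_antisymm hβ1 (h ▸ hαβ)])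
    rw [add_comm] at hv₁₂0 hv₁₂ ⊢
    exact smul_add_smul_mem_interior_of_le_of_lt_one hXconv hXstrict hv₁0 hv₁₂0 h0 hv₂ hv₁₂
      hα hαβ hβ1 hα1

theorem smul_add_smul_notMem_closure (hXconv : Convex ℝ X)
    (hXstrict : ∀ p ∈ frontier X, ∀ q ∈ frontier X, p ≠ q → openSegment ℝ p q ⊆ interior X)
    (hv₁0 : v₁ ≠ 0) (hv₂0 : v₂ ≠ 0) (hv₁₂0 : v₁ + v₂ ≠ 0) (h0 : (0 : E) ∈ frontier X)
    (hv₁ : v₁ ∈ frontier X) (hv₂ : v₂ ∈ frontier X) (hv₁₂ : v₁ + v₂ ∈ frontier X)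
    {a b : ℝ} (ha : 1 ≤ a) (hb : 1 ≤ b) (hne : (a, b) ≠ (1, 1)) :
    a • v₁ + b • v₂ ∉ closure X := by
  intro hw
  have hab : 0 < a + b := by linarith
  -- `(a + b + 1) • (v₁ + v₂) = ((b + 1) • v₁ + (a + 1) • v₂) + (a • v₁ + b • v₂)`
  have hq : ((b + 1) / (a + b)) • v₁ + ((a + 1) / (a + b)) • v₂ ∈ interior X := by
    refine smul_add_smul_mem_interior hXconv hXstrict hv₁0 hv₂0 hv₁₂0 h0 hv₁ hv₂ hv₁₂
      (by positivity) (by positivity) ((div_le_one hab).2 (by linarith))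
      ((div_le_one hab).2 (by linarith)) fun h => hne ?_
    simp only [Prod.mk.injEq, div_eq_one_iff_eq hab.ne'] at h ⊢
    constructor <;> linarith
  have hcorner := hXconv.combo_interior_closure_mem_interior hq hw
    (a := (a + b) / (a + b + 1)) (b := 1 / (a + b + 1)) (by positivity) (by positivity)
    (by field_simp)
  refine hv₁₂.2 ?_
  convert hcorner using 1
  match_scalars <;> field_simp <;> ring

end

theorem boundary_point_in_cone_coordinates_general
    (X : Set (EuclideanSpace ℝ (Fin 2)))
    (hXconv : Convex ℝ X)
    (hXstrict : ∀ p ∈ frontier X, ∀ q ∈ frontier X, p ≠ q →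
      openSegment ℝ p q ⊆ interior X)
    (v₁ v₂ w : EuclideanSpace ℝ (Fin 2))
    (hv : LinearIndependent ℝ ![v₁, v₂])
    (h0 : (0 : EuclideanSpace ℝ (Fin 2)) ∈ frontier X)
    (hv₁ : v₁ ∈ frontier X) (hv₂ : v₂ ∈ frontier X) (hv₁₂ : v₁ + v₂ ∈ frontier X)
    (hwX : w ∈ frontier X) (hwne : w ≠ v₁ + v₂)
    (a b : ℝ) (hw : w = a • v₁ + b • v₂) (ha : 0 < a) (hb : 0 < b) :
    (1 < a ∧ 0 < b ∧ b < 1) ∨ (1 < b ∧ 0 < a ∧ a < 1) := by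
  have hv₁₂0 : v₁ + v₂ ≠ 0 := fun h =>
    one_ne_zero (LinearIndependent.pair_iff.1 hv 1 1 (by simpa using h)).1
  have hne : (a, b) ≠ (1, 1) := by
    rintro ⟨⟩
    exact hwne (by simpa using hw)
  subst hw
  have hnot_inside : ¬(a ≤ 1 ∧ b ≤ 1) := fun ⟨ha1, hb1⟩ =>
    hwX.2 (smul_add_smul_mem_interior hXconv hXstrict (hv.ne_zero 0) (hv.ne_zero 1) hv₁₂0 h0
      hv₁ hv₂ hv₁₂ ha hb ha1 hb1 hne)
  have hnot_beyond : ¬(1 ≤ a ∧ 1 ≤ b) := fun ⟨ha1, hb1⟩ =>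
    smul_add_smul_notMem_closure hXconv hXstrict (hv.ne_zero 0) (hv.ne_zero 1) hv₁₂0 h0
      hv₁ hv₂ hv₁₂ ha1 hb1 hne (frontier_subset_closure hwX)
  rcases le_or_gt a 1 with ha1 | ha1 <;> rcases le_or_gt b 1 with hb1 | hb1
  · exact absurd ⟨ha1, hb1⟩ hnot_inside
  · exact Or.inr ⟨hb1, ha, ha1.lt_of_ne fun h => hnot_beyond ⟨h.ge, hb1.le⟩⟩
  · exact Or.inl ⟨ha1, hb, hb1.lt_of_ne fun h => hnot_beyond ⟨ha1.le, h.ge⟩⟩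
  · exact absurd ⟨ha1.le, hb1.le⟩ hnot_beyond

/-- If `0, v₁, v₂, v₁+v₂` lie on the boundary of a strictly convex planar body and
`w = a•v₁ + b•v₂` is a boundary point in the open cone spanned by `v₁, v₂` with
`w ≠ v₁ + v₂`, then exactly one of `a, b` is greater than `1` and the other lies
strictly between `0` and `1`. -/
theorem boundary_point_in_cone_coordinates
    (X : Set (EuclideanSpace ℝ (Fin 2)))
    (hXconv : Convex ℝ X) (hXcomp : IsCompact X) (hXint : (interior X).Nonempty)
    (hXstrict : ∀ p ∈ frontier X, ∀ q ∈ frontier X, p ≠ q →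
      openSegment ℝ p q ⊆ interior X)
    (v₁ v₂ w : EuclideanSpace ℝ (Fin 2))
    (hv : LinearIndependent ℝ ![v₁, v₂])
    (h0 : (0 : EuclideanSpace ℝ (Fin 2)) ∈ frontier X)
    (hv₁ : v₁ ∈ frontier X) (hv₂ : v₂ ∈ frontier X) (hv₁₂ : v₁ + v₂ ∈ frontier X)
    (hwX : w ∈ frontier X) (hwne : w ≠ v₁ + v₂)
    (a b : ℝ) (hw : w = a • v₁ + b • v₂) (ha : 0 < a) (hb : 0 < b) :
    (1 < a ∧ 0 < b ∧ b < 1) ∨ (1 < b ∧ 0 < a ∧ a < 1) :=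
  boundary_point_in_cone_coordinates_general X hXconv hXstrict v₁ v₂ w hv h0 hv₁ hv₂ hv₁₂ hwX hwne a
    b hw ha hb
end

section
/- Let X ⊂ ℝ² be a strongly convex body (smooth boundary with strictly positive curvature). Then through any fixed tangency point z ∈ ∂X there passes at most one 3-periodic outer billiard trajectory; i.e., there do not exist two distinct triangles x₁x₂x₃ and x₁'x₂'x₃' circumscribed about X whose sides touch ∂X exactly at their midpoints and which share the tangency point z on the line through x₁x₂ and x₁'x₂'. -/
open scoped RealInnerProductSpace

/-- `z` is the tangency point of the side `[p, q]` of a circumscribed polygon: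
`z` is the midpoint of `p` and `q`, and the line through `p` and `q` touches the
body `X` exactly at `z`. -/
def SideTangentAtMidpoint (X : Set (EuclideanSpace ℝ (Fin 2)))
    (p q : EuclideanSpace ℝ (Fin 2)) : Prop :=
  midpoint ℝ p q ∈ frontier X ∧
    (affineSpan ℝ {p, q} : Set (EuclideanSpace ℝ (Fin 2))) ∩ X = {midpoint ℝ p q}

/-- A 3-periodic outer billiard trajectory: a triangle circumscribed about `X` whose
sides are tangent to `∂X` exactly at their midpoints. -/
def IsOuterTraj3 (X : Set (EuclideanSpace ℝ (Fin 2)))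
    (x : Fin 3 → EuclideanSpace ℝ (Fin 2)) : Prop :=
  Function.Injective x ∧ ∀ i : Fin 3, SideTangentAtMidpoint X (x i) (x (i + 1))

/-!
Write the first triangle as `z - e, z + e, z + c`, where `z` is the common tangency point. A side
touching `X` only at its midpoint lies on a supporting line of `X`, so each triangle contains `X`
and in particular the three side midpoints of the other one. Smoothness at `z` puts both bases on
the tangent line at `z`, so after relabelling the second triangle is `z - s e, z + s e, z + c'` with
`s > 0`. With `ω` an area form and `r = ω e c' / ω e c > 0`, the four containments give
`s + r ≤ 2` and `s + r ≤ 2 s r`, which by AM-GM force `s = r = 1`; then `c' = c`.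
-/

theorem eq_one_and_eq_of_mul_le (s κ μ : ℝ) (hs : 0 < s) (hp : 0 < κ * μ)
    (h₁ : κ * μ ≤ (2 - s) * κ ^ 2) (h₂ : s * (κ * μ) ≤ (2 * s - 1) * μ ^ 2) :
    s = 1 ∧ μ = κ := by
  have hprod := mul_le_mul h₁ h₂ (by positivity) (hp.le.trans h₁)
  -- `(2 - s) * (2 * s - 1) - s = -2 * (s - 1) ^ 2`
  have hsq : (s - 1) ^ 2 * (κ * μ) ^ 2 ≤ 0 := by linear_combination hprod / 2
  have hs1 : s = 1 := by
    have := nonpos_of_mul_nonpos_left hsq (by positivity)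
    nlinarith [sq_nonneg (s - 1)]
  subst hs1
  have hμ : μ ^ 2 ≤ κ * μ := le_of_mul_le_mul_left (by nlinarith) hp
  have hκ : κ ^ 2 ≤ κ * μ := le_of_mul_le_mul_left (by nlinarith) hp
  have hsq' : (μ - κ) ^ 2 = 0 := le_antisymm (by nlinarith) (sq_nonneg _)
  exact ⟨rfl, sub_eq_zero.1 (pow_eq_zero_iff two_ne_zero |>.1 hsq')⟩

theorem midpoint_sub_add_eq {V : Type*} [AddCommGroup V] [Module ℝ V] (z e : V) :
    midpoint ℝ (z - e) (z + e) = z := by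
  rw [midpoint_eq_smul_add, invOf_eq_inv]; module

theorem midpoint_add_add_eq {V : Type*} [AddCommGroup V] [Module ℝ V] (z e c : V) :
    midpoint ℝ (z + e) (z + c) = z + (2⁻¹ : ℝ) • (e + c) := by
  rw [midpoint_eq_smul_add, invOf_eq_inv]; module

theorem Convex.exists_unit_normal_of_disjoint_interior {E : Type*} [NormedAddCommGroup E]
    [InnerProductSpace ℝ E] [CompleteSpace E] {X : Set E} (hX : Convex ℝ X)
    (hXint : (interior X).Nonempty) {L : AffineSubspace ℝ E} (hL : Disjoint (interior X) L)
    {m : E} (hmL : m ∈ L) (hmX : m ∈ X) :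
    ∃ n : E, ‖n‖ = 1 ∧ (∀ y ∈ L, ⟪y - m, n⟫ = 0) ∧ ∀ y ∈ X, ⟪y - m, n⟫ ≤ 0 := by
  obtain ⟨f, u, hf_int, hf_L⟩ :=
    geometric_hahn_banach_open hX.interior isOpen_interior L.convex hL
  have hf_X : ∀ y ∈ X, f y ≤ u := by
    have : closure (interior X) ⊆ {y | f y ≤ u} :=
      closure_minimal (fun y hy ↦ (hf_int y hy).le) (isClosed_le f.continuous continuous_const)
    rw [hX.closure_interior_eq_closure_of_nonempty_interior hXint] at this
    exact fun y hy ↦ this (subset_closure hy)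
  have hfm : f m = u := le_antisymm (hf_X m hmX) (hf_L m hmL)
  -- `f` is bounded below on the line of `L` through `m` and `y`, hence constant on it
  have hf_const : ∀ y ∈ L, f (y - m) = 0 := by
    intro y hy
    have := hf_L _ (L.smul_vsub_vadd_mem (-f (y - m)) hy hmL hmL)
    simp only [vsub_eq_sub, vadd_eq_add, map_add, map_smul, smul_eq_mul, hfm] at this
    nlinarith
  set n := (InnerProductSpace.toDual ℝ E).symm f
  have hn : ∀ w, ⟪w, (‖n‖⁻¹ : ℝ) • n⟫ = ‖n‖⁻¹ * f w := fun w ↦ by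
    rw [real_inner_smul_right, real_inner_comm, InnerProductSpace.toDual_symm_apply]
  have hn0 : n ≠ 0 := by
    refine (map_ne_zero_iff _ (InnerProductSpace.toDual ℝ E).symm.injective).2 ?_
    obtain ⟨a, ha⟩ := hXint
    rintro rfl
    simpa using (hf_int a ha).trans_le (hf_L m hmL)
  refine ⟨(‖n‖⁻¹ : ℝ) • n, norm_smul_inv_norm hn0, fun y hy ↦ by rw [hn, hf_const y hy, mul_zero],
    fun y hy ↦ ?_⟩
  rw [hn, map_sub, hfm]
  exact mul_nonpos_of_nonneg_of_nonpos (by positivity) (by linarith [hf_X y hy])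

namespace Orientation

variable {E : Type*} [NormedAddCommGroup E] [InnerProductSpace ℝ E]
  [Fact (Module.finrank ℝ E = 2)] (o : Orientation ℝ E (Fin 2))

local notation "ω" => o.areaForm
local notation "J" => o.rightAngleRotation

theorem norm_sq_smul_eq_inner_smul_add_areaForm_smul (a x : E) :
    ‖a‖ ^ 2 • x = ⟪a, x⟫ • a + ω a x • J a := by
  refine ext_inner_left ℝ fun b ↦ ?_
  rw [inner_add_right, real_inner_smul_right, real_inner_smul_right, real_inner_smul_right,
    inner_rightAngleRotation_right, o.areaForm_swap b a, neg_neg, real_inner_comm a b,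
    o.inner_mul_inner_add_areaForm_mul_areaForm a x b, real_inner_comm]

theorem exists_eq_smul_of_areaForm_eq_zero {a x : E} (ha : a ≠ 0) (h : ω a x = 0) :
    ∃ r : ℝ, x = r • a := by
  refine ⟨⟪a, x⟫ / ‖a‖ ^ 2, ?_⟩
  have := o.norm_sq_smul_eq_inner_smul_add_areaForm_smul a x
  rw [h, zero_smul, add_zero] at this
  rw [div_eq_inv_mul, mul_smul, ← this, smul_smul, inv_mul_cancel₀ (by positivity), one_smul]

theorem eq_zero_of_areaForm_eq_zero {a b x : E} (hab : ω a b ≠ 0) (ha : ω a x = 0)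
    (hb : ω b x = 0) : x = 0 := by
  have := o.inner_mul_areaForm_sub x a b
  rw [o.areaForm_swap x a, o.areaForm_swap x b, ha, hb] at this
  simpa [hab] using this

theorem areaForm_eq_zero_of_inner_eq_zero {n a b : E} (hn : n ≠ 0) (ha : ⟪a, n⟫ = 0)
    (hb : ⟪b, n⟫ = 0) : ω a b = 0 := by
  have := o.inner_mul_areaForm_sub n a b
  rw [real_inner_comm, ha, real_inner_comm, hb] at this
  simpa [hn] using this

theorem areaForm_mul_areaForm_nonneg {n d x y : E} (hn : n ≠ 0) (hd : ⟪d, n⟫ = 0)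
    (hx : ⟪x, n⟫ ≤ 0) (hy : ⟪y, n⟫ ≤ 0) : 0 ≤ ω d x * ω d y := by
  rcases eq_or_ne d 0 with rfl | hd0
  · simp
  have key : ∀ w, ω d n * ω d w = ‖d‖ ^ 2 * ⟪w, n⟫ := fun w ↦ by
    simpa [hd, real_inner_comm n w] using o.inner_mul_inner_add_areaForm_mul_areaForm d n w
  have hdn : 0 < ω d n ^ 2 := by
    have := o.inner_sq_add_areaForm_sq d n
    rw [hd] at this
    have : 0 < ‖d‖ ^ 2 * ‖n‖ ^ 2 := by positivity
    linarith
  refine nonneg_of_mul_nonneg_right ?_ hdn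
  calc 0 ≤ (‖d‖ ^ 2 * ⟪x, n⟫) * (‖d‖ ^ 2 * ⟪y, n⟫) :=
        mul_nonneg_of_nonpos_of_nonpos (mul_nonpos_of_nonneg_of_nonpos (by positivity) hx)
          (mul_nonpos_of_nonneg_of_nonpos (by positivity) hy)
    _ = ω d n ^ 2 * (ω d x * ω d y) := by rw [← key, ← key]; ring

end Orientation

instance fact_finrank_euclideanSpace_fin_two :
    Fact (Module.finrank ℝ (EuclideanSpace ℝ (Fin 2)) = 2) :=
  ⟨finrank_euclideanSpace_fin⟩

namespace SideTangentAtMidpoint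

variable {X : Set (EuclideanSpace ℝ (Fin 2))} {p q : EuclideanSpace ℝ (Fin 2)}
  (o : Orientation ℝ (EuclideanSpace ℝ (Fin 2)) (Fin 2))

local notation "ω" => o.areaForm

theorem symm (h : SideTangentAtMidpoint X p q) : SideTangentAtMidpoint X q p := by
  rw [SideTangentAtMidpoint, midpoint_comm, Set.pair_comm]
  exact h

theorem midpoint_mem (h : SideTangentAtMidpoint X p q) : midpoint ℝ p q ∈ X :=
  (h.2.ge rfl).2

theorem exists_unit_normal (h : SideTangentAtMidpoint X p q) (hX : Convex ℝ X)
    (hXint : (interior X).Nonempty) :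
    ∃ n, ‖n‖ = 1 ∧ ⟪q - p, n⟫ = 0 ∧ ∀ y ∈ X, ⟪y - midpoint ℝ p q, n⟫ ≤ 0 := by
  have hmL : midpoint ℝ p q ∈ line[ℝ, p, q] :=
    AffineMap.lineMap_mem_affineSpan_pair _ p q
  have hdisj : Disjoint (interior X) (line[ℝ, p, q] : Set (EuclideanSpace ℝ (Fin 2))) := by
    refine Set.disjoint_left.2 fun y hyX hyL ↦ h.1.2 ?_
    rwa [← (h.2.le ⟨hyL, interior_subset hyX⟩ : y = _)]
  obtain ⟨n, hn, hnL, hnX⟩ :=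
    hX.exists_unit_normal_of_disjoint_interior hXint hdisj hmL h.midpoint_mem
  refine ⟨n, hn, ?_, hnX⟩
  rw [← sub_sub_sub_cancel_right q p (midpoint ℝ p q), inner_sub_left,
    hnL q (right_mem_affineSpan_pair ℝ p q), hnL p (left_mem_affineSpan_pair ℝ p q), sub_zero]

theorem areaForm_mul_nonneg (h : SideTangentAtMidpoint X p q) (hX : Convex ℝ X)
    (hXint : (interior X).Nonempty) {y w : EuclideanSpace ℝ (Fin 2)} (hy : y ∈ X)
    (hw : w ∈ X) :
    0 ≤ ω (q - p) (y - midpoint ℝ p q) * ω (q - p) (w - midpoint ℝ p q) := by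
  obtain ⟨n, hn, hnd, hnX⟩ := h.exists_unit_normal hX hXint
  exact o.areaForm_mul_areaForm_nonneg (norm_ne_zero_iff.1 (hn ▸ one_ne_zero)) hnd (hnX y hy)
    (hnX w hw)

theorem eq_midpoint_of_areaForm_eq_zero (h : SideTangentAtMidpoint X p q) (hpq : p ≠ q)
    {y : EuclideanSpace ℝ (Fin 2)} (hy : y ∈ X) (hyL : ω (q - p) (y - midpoint ℝ p q) = 0) :
    y = midpoint ℝ p q := by
  obtain ⟨r, hr⟩ := o.exists_eq_smul_of_areaForm_eq_zero (sub_ne_zero.2 hpq.symm) hyL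
  have : y = AffineMap.lineMap p q (r + 2⁻¹ : ℝ) := by
    rw [sub_eq_iff_eq_add'.1 hr, AffineMap.lineMap_apply, midpoint_eq_smul_add]
    simp only [vsub_eq_sub, vadd_eq_add, invOf_eq_inv]
    module
  exact h.2.le ⟨this ▸ AffineMap.lineMap_mem_affineSpan_pair _ p q, hy⟩

theorem areaForm_eq_zero_of_existsUnique_normal (h : SideTangentAtMidpoint X p q)
    {p' q' : EuclideanSpace ℝ (Fin 2)} (h' : SideTangentAtMidpoint X p' q')
    (hm : midpoint ℝ p q = midpoint ℝ p' q') (hX : Convex ℝ X) (hXint : (interior X).Nonempty)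
    (hsmooth : ∃! v : EuclideanSpace ℝ (Fin 2),
      ‖v‖ = 1 ∧ ∀ y ∈ X, ⟪y - midpoint ℝ p q, v⟫ ≤ 0) :
    ω (q - p) (q' - p') = 0 := by
  obtain ⟨n, hn, hnd, hnX⟩ := h.exists_unit_normal hX hXint
  obtain ⟨n', hn', hnd', hnX'⟩ := h'.exists_unit_normal hX hXint
  rw [hsmooth.unique ⟨hn', hm ▸ hnX'⟩ ⟨hn, hnX⟩] at hnd'
  exact o.areaForm_eq_zero_of_inner_eq_zero (norm_ne_zero_iff.1 (hn ▸ one_ne_zero)) hnd hnd'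

end SideTangentAtMidpoint

section Triangle

variable {X : Set (EuclideanSpace ℝ (Fin 2))} {z e c : EuclideanSpace ℝ (Fin 2)}
  (o : Orientation ℝ (EuclideanSpace ℝ (Fin 2)) (Fin 2))

local notation "ω" => o.areaForm

theorem areaForm_ne_zero_of_sideTangentAtMidpoint (h01 : SideTangentAtMidpoint X (z - e) (z + e))
    (h12 : SideTangentAtMidpoint X (z + e) (z + c)) (h01ne : z - e ≠ z + e)
    (h20ne : z + c ≠ z - e) : ω e c ≠ 0 := by
  intro hκ
  have hP := h01.eq_midpoint_of_areaForm_eq_zero o h01ne h12.midpoint_mem ?_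
  · rw [midpoint_add_add_eq, midpoint_sub_add_eq, add_eq_left, smul_eq_zero] at hP
    exact h20ne (by linear_combination (norm := module) hP.resolve_left (by norm_num))
  · rw [midpoint_add_add_eq, midpoint_sub_add_eq, add_sub_cancel_left,
      show z + e - (z - e) = (2 : ℝ) • e by module]
    simp [hκ, o.areaForm_apply_self]

/-- `z + a` lies on the same side as the triangle `z - e, z + e, z + c` of each of its sides. -/
theorem areaForm_mul_nonneg_of_sideTangentAtMidpoint (hX : Convex ℝ X)
    (hXint : (interior X).Nonempty) (h01 : SideTangentAtMidpoint X (z - e) (z + e))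
    (h12 : SideTangentAtMidpoint X (z + e) (z + c)) (h20 : SideTangentAtMidpoint X (z + c) (z - e))
    {a : EuclideanSpace ℝ (Fin 2)} (ha : z + a ∈ X) :
    0 ≤ ω e a * ω e c ∧ 0 ≤ (ω c a - ω e a + ω e c) * ω e c ∧
      0 ≤ (ω e c - ω e a - ω c a) * ω e c := by
  have hzX : z ∈ X := midpoint_sub_add_eq z e ▸ h01.midpoint_mem
  rw [sub_eq_add_neg] at h01 h20
  have h0 := h01.areaForm_mul_nonneg o hX hXint ha h12.midpoint_mem
  have h1 := h12.areaForm_mul_nonneg o hX hXint ha hzX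
  have h2 := h20.areaForm_mul_nonneg o hX hXint ha hzX
  simp only [midpoint_add_add_eq, add_sub_add_left_eq_sub, sub_add_cancel_left, neg_add_cancel,
    smul_zero, sub_zero, map_sub, map_add, map_neg, map_smul, LinearMap.sub_apply,
    LinearMap.neg_apply, smul_eq_mul, o.areaForm_apply_self] at h0 h1 h2
  rw [o.areaForm_swap c e] at h1 h2
  exact ⟨by linear_combination h0 / 2, by linear_combination h1, by linear_combination h2⟩

theorem eq_one_and_eq_of_sideTangentAtMidpoint (hX : Convex ℝ X)
    (hXint : (interior X).Nonempty) (h01 : SideTangentAtMidpoint X (z - e) (z + e))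
    (h12 : SideTangentAtMidpoint X (z + e) (z + c)) (h20 : SideTangentAtMidpoint X (z + c) (z - e))
    {s : ℝ} {c' : EuclideanSpace ℝ (Fin 2)}
    (h01' : SideTangentAtMidpoint X (z - s • e) (z + s • e))
    (h12' : SideTangentAtMidpoint X (z + s • e) (z + c'))
    (h20' : SideTangentAtMidpoint X (z + c') (z - s • e))
    (hs : 0 < s) (hκ : ω e c ≠ 0) (hμ : ω e c' ≠ 0) : s = 1 ∧ c' = c := by
  have hP := h12.midpoint_mem
  have hQ := h20.midpoint_mem
  have hP' := h12'.midpoint_mem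
  have hQ' := h20'.midpoint_mem
  simp only [sub_eq_add_neg, midpoint_add_add_eq] at hP hQ hP' hQ'
  -- `hB`: both apexes lie on the same side of the common base line
  obtain ⟨hB, hS₁, -⟩ :=
    areaForm_mul_nonneg_of_sideTangentAtMidpoint o hX hXint h01 h12 h20 hP'
  obtain ⟨-, -, hS₂⟩ :=
    areaForm_mul_nonneg_of_sideTangentAtMidpoint o hX hXint h01 h12 h20 hQ'
  obtain ⟨-, hS₁', -⟩ :=
    areaForm_mul_nonneg_of_sideTangentAtMidpoint o hX hXint h01' h12' h20' hP
  obtain ⟨-, -, hS₂'⟩ :=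
    areaForm_mul_nonneg_of_sideTangentAtMidpoint o hX hXint h01' h12' h20' hQ
  simp only [map_add, map_neg, map_smul, LinearMap.smul_apply, smul_eq_mul,
    o.areaForm_apply_self] at hB hS₁ hS₂ hS₁' hS₂'
  rw [o.areaForm_swap c e, o.areaForm_swap c' e, o.areaForm_swap c' c] at *
  generalize hκdef : ω e c = κ at *
  generalize hμdef : ω e c' = μ at *
  generalize hνdef : ω c c' = ν at *
  have hp : 0 < κ * μ :=
    (by linear_combination 2 * hB : 0 ≤ κ * μ).lt_of_ne (mul_ne_zero hκ hμ).symm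
  obtain ⟨rfl, rfl⟩ := eq_one_and_eq_of_mul_le s κ μ hs hp
    (by linear_combination hS₁ + hS₂) (le_of_mul_le_mul_left (by linear_combination hS₁' + hS₂') hs)
  have hν : ν = 0 := (mul_eq_zero.1 (le_antisymm (by linear_combination 2 * hS₁')
    (by linear_combination 2 * hS₁))).resolve_right hκ
  refine ⟨rfl, sub_eq_zero.1 (o.eq_zero_of_areaForm_eq_zero (hκdef ▸ hκ) ?_ ?_)⟩
  · rw [map_sub, hμdef, hκdef, sub_self]
  · rw [map_sub, hνdef, o.areaForm_apply_self, hν, sub_self]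

end Triangle

namespace IsOuterTraj3

variable {X : Set (EuclideanSpace ℝ (Fin 2))} {x x' : Fin 3 → EuclideanSpace ℝ (Fin 2)}

theorem swap (hx : IsOuterTraj3 X x) : IsOuterTraj3 X (x ∘ Equiv.swap 0 1) := by
  refine ⟨hx.1.comp (Equiv.swap 0 1).injective, fun i ↦ ?_⟩
  fin_cases i
  · simpa using (hx.2 0).symm
  · simpa [Equiv.swap_apply_of_ne_of_ne] using (hx.2 2).symm
  · simpa [Equiv.swap_apply_of_ne_of_ne] using (hx.2 1).symm

theorem eq_of_sub_eq_smul (hX : Convex ℝ X) (hXint : (interior X).Nonempty)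
    (hx : IsOuterTraj3 X x) (hx' : IsOuterTraj3 X x')
    (hz : midpoint ℝ (x 0) (x 1) = midpoint ℝ (x' 0) (x' 1)) {s : ℝ} (hs : 0 < s)
    (hd : x' 1 - x' 0 = s • (x 1 - x 0)) : x' = x := by
  let o : Orientation ℝ (EuclideanSpace ℝ (Fin 2)) (Fin 2) :=
    (EuclideanSpace.basisFun (Fin 2) ℝ).toBasis.orientation
  obtain ⟨z, e, c, c', h0, h1, h2, h0', h1', h2'⟩ : ∃ z e c c' : EuclideanSpace ℝ (Fin 2),
      x 0 = z - e ∧ x 1 = z + e ∧ x 2 = z + c ∧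
      x' 0 = z - s • e ∧ x' 1 = z + s • e ∧ x' 2 = z + c' := by
    refine ⟨midpoint ℝ (x 0) (x 1), x 1 - midpoint ℝ (x 0) (x 1), x 2 - midpoint ℝ (x 0) (x 1),
      x' 2 - midpoint ℝ (x 0) (x 1), ?_, ?_, ?_, ?_, ?_, ?_⟩
    all_goals simp only [midpoint_eq_smul_add, invOf_eq_inv] at hz ⊢
    · module
    · module
    · module
    · linear_combination (norm := module) -hz - (2⁻¹ : ℝ) • hd
    · linear_combination (norm := module) -hz + (2⁻¹ : ℝ) • hd
    · module
  have hT : SideTangentAtMidpoint X (z - e) (z + e) ∧ SideTangentAtMidpoint X (z + e) (z + c) ∧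
      SideTangentAtMidpoint X (z + c) (z - e) := by
    rw [← h0, ← h1, ← h2]; exact ⟨hx.2 0, hx.2 1, hx.2 2⟩
  have hT' : SideTangentAtMidpoint X (z - s • e) (z + s • e) ∧
      SideTangentAtMidpoint X (z + s • e) (z + c') ∧
      SideTangentAtMidpoint X (z + c') (z - s • e) := by
    rw [← h0', ← h1', ← h2']; exact ⟨hx'.2 0, hx'.2 1, hx'.2 2⟩
  have hκ := areaForm_ne_zero_of_sideTangentAtMidpoint o hT.1 hT.2.1
    (h0 ▸ h1 ▸ hx.1.ne (by decide)) (h2 ▸ h0 ▸ hx.1.ne (by decide))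
  have hκ' := areaForm_ne_zero_of_sideTangentAtMidpoint o hT'.1 hT'.2.1
    (h0' ▸ h1' ▸ hx'.1.ne (by decide)) (h2' ▸ h0' ▸ hx'.1.ne (by decide))
  rw [map_smul, LinearMap.smul_apply, smul_ne_zero_iff] at hκ'
  obtain ⟨rfl, rfl⟩ := eq_one_and_eq_of_sideTangentAtMidpoint o hX hXint hT.1 hT.2.1 hT.2.2
    hT'.1 hT'.2.1 hT'.2.2 hs hκ hκ'.2
  funext i
  fin_cases i <;> simp [h0, h1, h2, h0', h1', h2']

end IsOuterTraj3

theorem outer_billiard_three_periodic_unique_general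
    (X : Set (EuclideanSpace ℝ (Fin 2)))
    (hXconv : Convex ℝ X) (hXint : (interior X).Nonempty)
    (hXsmooth : ∀ z ∈ frontier X, ∃! v : EuclideanSpace ℝ (Fin 2),
      ‖v‖ = 1 ∧ ∀ y ∈ X, ⟪y - z, v⟫ ≤ 0)
    (x x' : Fin 3 → EuclideanSpace ℝ (Fin 2))
    (hx : IsOuterTraj3 X x) (hx' : IsOuterTraj3 X x')
    (hz : midpoint ℝ (x 0) (x 1) = midpoint ℝ (x' 0) (x' 1)) :
    Set.range x = Set.range x' := by
  let o : Orientation ℝ (EuclideanSpace ℝ (Fin 2)) (Fin 2) :=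
    (EuclideanSpace.basisFun (Fin 2) ℝ).toBasis.orientation
  have hpar : o.areaForm (x 1 - x 0) (x' 1 - x' 0) = 0 :=
    (hx.2 0).areaForm_eq_zero_of_existsUnique_normal o (hx'.2 0) hz hXconv hXint
      (hXsmooth _ (hx.2 0).1)
  obtain ⟨s, hs⟩ :=
    o.exists_eq_smul_of_areaForm_eq_zero (sub_ne_zero.2 (hx.1.ne (by decide)).symm) hpar
  rcases lt_trichotomy s 0 with hneg | rfl | hpos
  · have hswap := hx.eq_of_sub_eq_smul hXconv hXint hx'.swap
      (by simpa [midpoint_comm] using hz) (neg_pos.2 hneg) (by simp [← hs])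
    rw [← hswap, (Equiv.swap (0 : Fin 3) 1).surjective.range_comp]
  · exact absurd (sub_eq_zero.1 (hs.trans (zero_smul ℝ _))) (hx'.1.ne (by decide)).symm
  · rw [hx.eq_of_sub_eq_smul hXconv hXint hx' hz hpos hs]

/-- Through any tangency point `z ∈ ∂X` of a strongly convex planar body (convex compact
body with smooth boundary, encoded by strict convexity and uniqueness of the outer unit
normal at every boundary point) there passes at most one 3-periodic outer billiard
trajectory. -/
theorem outer_billiard_three_periodic_unique
    (X : Set (EuclideanSpace ℝ (Fin 2)))
    (hXconv : Convex ℝ X) (hXcomp : IsCompact X) (hXint : (interior X).Nonempty)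
    (hXstrict : ∀ p ∈ frontier X, ∀ q ∈ frontier X, p ≠ q →
      openSegment ℝ p q ⊆ interior X)
    (hXsmooth : ∀ z ∈ frontier X, ∃! v : EuclideanSpace ℝ (Fin 2),
      ‖v‖ = 1 ∧ ∀ y ∈ X, ⟪y - z, v⟫ ≤ 0)
    (x x' : Fin 3 → EuclideanSpace ℝ (Fin 2))
    (hx : IsOuterTraj3 X x) (hx' : IsOuterTraj3 X x')
    (hz : midpoint ℝ (x 0) (x 1) = midpoint ℝ (x' 0) (x' 1)) :
    Set.range x = Set.range x' :=
  outer_billiard_three_periodic_unique_general X hXconv hXint hXsmooth x x' hx hx' hz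
end

section
/- Let X ⊂ ℝ^{2n} be a strictly convex body with smooth boundary in standard symplectic space, and for z ∈ ∂X let the characteristic direction be JN_z where N_z is the outer unit normal and J the standard complex structure. Then through any boundary point A ∈ ∂X there is at most one 4-periodic symplectic billiard trajectory, i.e., at most one quadruple (A,B,C,D) of boundary points such that the characteristic lines at A and C are both parallel to BD, and the characteristic lines at B and D are both parallel to AC. -/
/-!
Strict convexity makes the outer normal injective on the boundary: two boundary points with
the same normal `v` would have their midpoint in the interior, where `⟪· - p, v⟫` and
`⟪· - q, v⟫` are both negative although they sum to zero there. Since `J` is injective and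
normals are unit vectors, two distinct boundary points with parallel characteristic lines
therefore have opposite normals. So `C` is the boundary point with normal `-ν A`, and
`B, D, B'` all have characteristic lines parallel to `AC`, which leaves only the two
orderings of `{B, D}`.
-/

open scoped RealInnerProductSpace

/-- The standard complex structure `J` on `ℝ^{2n}`:
`J eᵢ = e_{i+n}` for `i < n` and `J eᵢ = -e_{i-n}` for `i ≥ n`. -/
def Jstd (n : ℕ) (v : EuclideanSpace ℝ (Fin (2 * n))) : EuclideanSpace ℝ (Fin (2 * n)) :=
  WithLp.toLp 2 fun (i : Fin (2 * n)) =>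
    if h : (i : ℕ) < n then v ⟨(i : ℕ) + n, by omega⟩
    else -v ⟨(i : ℕ) - n, by have := i.isLt; omega⟩

/-- A 4-periodic symplectic billiard trajectory for a body `X` with outer unit normal
field `ν`: four pairwise distinct boundary points `A B C D` such that the characteristic
lines `J ν` at `A` and `C` are parallel to `BD`, and those at `B` and `D` are parallel
to `AC`. -/
def IsSymplecticTraj4 (n : ℕ) (X : Set (EuclideanSpace ℝ (Fin (2 * n))))
    (ν : EuclideanSpace ℝ (Fin (2 * n)) → EuclideanSpace ℝ (Fin (2 * n)))
    (A B C D : EuclideanSpace ℝ (Fin (2 * n))) : Prop :=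
  A ∈ frontier X ∧ B ∈ frontier X ∧ C ∈ frontier X ∧ D ∈ frontier X ∧
    A ≠ B ∧ A ≠ C ∧ A ≠ D ∧ B ≠ C ∧ B ≠ D ∧ C ≠ D ∧
    (∃ t : ℝ, t ≠ 0 ∧ D - B = t • Jstd n (ν A)) ∧
    (∃ t : ℝ, t ≠ 0 ∧ D - B = t • Jstd n (ν C)) ∧
    (∃ t : ℝ, t ≠ 0 ∧ C - A = t • Jstd n (ν B)) ∧
    (∃ t : ℝ, t ≠ 0 ∧ C - A = t • Jstd n (ν D))

section SupportingNormal

variable {E : Type*} [NormedAddCommGroup E] [InnerProductSpace ℝ E]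

open Filter Topology in
lemma inner_sub_neg_of_mem_interior {X : Set E} {p v y : E} (hv : v ≠ 0)
    (hp : ∀ z ∈ X, ⟪z - p, v⟫ ≤ 0) (hy : y ∈ interior X) : ⟪y - p, v⟫ < 0 := by
  have hpath : Tendsto (fun ε : ℝ => y + ε • v) (𝓝[>] 0) (𝓝 y) := by
    have : Continuous fun ε : ℝ => y + ε • v := by fun_prop
    simpa using (this.tendsto 0).mono_left nhdsWithin_le_nhds
  obtain ⟨ε, hεX, hε⟩ :=
    ((hpath.eventually (mem_interior_iff_mem_nhds.mp hy)).and self_mem_nhdsWithin).exists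
  have hle := hp _ hεX
  rw [add_sub_right_comm, inner_add_left, real_inner_smul_left] at hle
  have : 0 < ‖v‖ ^ 2 := by positivity
  rw [real_inner_self_eq_norm_sq] at hle
  nlinarith [mul_pos (Set.mem_Ioi.mp hε) this]

lemma midpoint_notMem_interior {X : Set E} {p q v : E} (hv : v ≠ 0)
    (hp : ∀ z ∈ X, ⟪z - p, v⟫ ≤ 0) (hq : ∀ z ∈ X, ⟪z - q, v⟫ ≤ 0) :
    midpoint ℝ p q ∉ interior X := by
  intro hm
  have hmp := inner_sub_neg_of_mem_interior hv hp hm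
  have hmq := inner_sub_neg_of_mem_interior hv hq hm
  rw [midpoint_sub_left, real_inner_smul_left] at hmp
  rw [midpoint_sub_right, real_inner_smul_left, ← neg_sub, inner_neg_left] at hmq
  nlinarith [show (0 : ℝ) < ⅟2 by norm_num]

lemma eq_or_eq_neg_of_smul_eq_smul {u v : E} (hu : ‖u‖ = 1) (hv : ‖v‖ = 1) {t s : ℝ}
    (hs : s ≠ 0) (h : t • u = s • v) : v = u ∨ v = -u := by
  have hvu : v = (t / s) • u := by
    rw [div_eq_inv_mul, mul_smul, h, inv_smul_smul₀ hs]
  have hts : |t / s| = 1 := by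
    rwa [hvu, norm_smul, hu, mul_one, Real.norm_eq_abs] at hv
  rcases abs_eq (zero_le_one' ℝ) |>.mp hts with h1 | h1 <;> simp [hvu, h1]

lemma eq_of_normal_eq {X : Set E} {ν : E → E}
    (hXstrict : ∀ p ∈ frontier X, ∀ q ∈ frontier X, p ≠ q →
      openSegment ℝ p q ⊆ interior X)
    (hν : ∀ z ∈ frontier X, ‖ν z‖ = 1 ∧ ∀ y ∈ X, ⟪y - z, ν z⟫ ≤ 0)
    {p q : E} (hp : p ∈ frontier X) (hq : q ∈ frontier X) (hpq : ν p = ν q) : p = q := by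
  by_contra hne
  have hv : ν p ≠ 0 := norm_ne_zero_iff.mp ((hν p hp).1 ▸ one_ne_zero)
  refine midpoint_notMem_interior hv (hν p hp).2 (hpq ▸ (hν q hq).2) ?_
  exact hXstrict p hp q hq hne (midpoint_mem_openSegment p q)

end SupportingNormal

section Jstd

variable {n : ℕ}

lemma Jstd_smul (r : ℝ) (v : EuclideanSpace ℝ (Fin (2 * n))) :
    Jstd n (r • v) = r • Jstd n v := by
  ext i
  simp only [Jstd, PiLp.smul_apply, PiLp.toLp_apply, smul_eq_mul]
  split <;> ring

lemma Jstd_Jstd (v : EuclideanSpace ℝ (Fin (2 * n))) : Jstd n (Jstd n v) = -v := by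
  ext ⟨i, hi⟩
  simp only [Jstd, PiLp.neg_apply, PiLp.toLp_apply]
  by_cases h : i < n
  · rw [dif_pos h, dif_neg (by omega)]
    exact congrArg (-v ·) (Fin.ext (by simp only; omega))
  · rw [dif_neg h, dif_pos (by omega)]
    exact congrArg (-v ·) (Fin.ext (by simp only; omega))

lemma Jstd_injective : Function.Injective (Jstd n) := fun v w h => by
  simpa [Jstd_Jstd] using congrArg (Jstd n) h

end Jstd

lemma normal_eq_neg_of_parallel {n : ℕ} {X : Set (EuclideanSpace ℝ (Fin (2 * n)))}
    {ν : EuclideanSpace ℝ (Fin (2 * n)) → EuclideanSpace ℝ (Fin (2 * n))}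
    (hXstrict : ∀ p ∈ frontier X, ∀ q ∈ frontier X, p ≠ q →
      openSegment ℝ p q ⊆ interior X)
    (hν : ∀ z ∈ frontier X, ‖ν z‖ = 1 ∧ ∀ y ∈ X, ⟪y - z, ν z⟫ ≤ 0)
    {p q a : EuclideanSpace ℝ (Fin (2 * n))} (hp : p ∈ frontier X) (hq : q ∈ frontier X)
    (hpq : p ≠ q) (hap : ∃ t : ℝ, t ≠ 0 ∧ a = t • Jstd n (ν p))
    (haq : ∃ s : ℝ, s ≠ 0 ∧ a = s • Jstd n (ν q)) : ν q = -ν p := by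
  obtain ⟨t, -, rfl⟩ := hap
  obtain ⟨s, hs, hts⟩ := haq
  rw [← Jstd_smul, ← Jstd_smul] at hts
  refine (eq_or_eq_neg_of_smul_eq_smul (hν p hp).1 (hν q hq).1 hs
    (Jstd_injective hts)).resolve_left fun h => hpq ?_
  exact eq_of_normal_eq hXstrict hν hp hq h.symm

theorem symplectic_billiard_four_periodic_unique_general
    (n : ℕ) (X : Set (EuclideanSpace ℝ (Fin (2 * n))))
    (hXstrict : ∀ p ∈ frontier X, ∀ q ∈ frontier X, p ≠ q →
      openSegment ℝ p q ⊆ interior X)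
    (ν : EuclideanSpace ℝ (Fin (2 * n)) → EuclideanSpace ℝ (Fin (2 * n)))
    (hν : ∀ z ∈ frontier X, ‖ν z‖ = 1 ∧ ∀ y ∈ X, ⟪y - z, ν z⟫ ≤ 0)
    (A B C D B' C' D' : EuclideanSpace ℝ (Fin (2 * n)))
    (h : IsSymplecticTraj4 n X ν A B C D) (h' : IsSymplecticTraj4 n X ν A B' C' D') :
    C = C' ∧ ((B = B' ∧ D = D') ∨ (B = D' ∧ D = B')) := by
  have unique {p q} (hp : p ∈ frontier X) (hq : q ∈ frontier X) : ν p = ν q → p = q :=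
    eq_of_normal_eq hXstrict hν hp hq
  have opposite {p q a} (hp : p ∈ frontier X) (hq : q ∈ frontier X) (hpq : p ≠ q)
      (hap : ∃ t : ℝ, t ≠ 0 ∧ a = t • Jstd n (ν p))
      (haq : ∃ s : ℝ, s ≠ 0 ∧ a = s • Jstd n (ν q)) : ν q = -ν p :=
    normal_eq_neg_of_parallel hXstrict hν hp hq hpq hap haq
  obtain ⟨hA, hB, hC, hD, -, hAC, -, -, hBD, -, hA_BD, hC_BD, hB_AC, hD_AC⟩ := h
  obtain ⟨-, hB', hC', hD', -, hAC', -, -, hBD', -, hA_BD', hC_BD', hB_AC', hD_AC'⟩ := h'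
  obtain rfl : C = C' := unique hC hC'
    ((opposite hA hC hAC hA_BD hC_BD).trans (opposite hA hC' hAC' hA_BD' hC_BD').symm)
  have hνD : ν D = -ν B := opposite hB hD hBD hB_AC hD_AC
  have hνD' : ν D' = -ν B' := opposite hB' hD' hBD' hB_AC' hD_AC'
  refine ⟨rfl, ?_⟩
  by_cases hBB' : B = B'
  · subst hBB'
    exact .inl ⟨rfl, unique hD hD' (hνD.trans hνD'.symm)⟩
  · have hνB' : ν B' = -ν B := opposite hB hB' hBB' hB_AC hB_AC'
    exact .inr ⟨unique hB hD' (by rw [hνD', hνB', neg_neg]),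
      unique hD hB' (hνD.trans hνB'.symm)⟩

/-- Through any boundary point `A` of a strictly convex smooth body in standard
symplectic `ℝ^{2n}` there is at most one 4-periodic symplectic billiard trajectory. -/
theorem symplectic_billiard_four_periodic_unique
    (n : ℕ) (hn : 1 ≤ n) (X : Set (EuclideanSpace ℝ (Fin (2 * n))))
    (hXconv : Convex ℝ X) (hXcomp : IsCompact X) (hXint : (interior X).Nonempty)
    (hXstrict : ∀ p ∈ frontier X, ∀ q ∈ frontier X, p ≠ q →
      openSegment ℝ p q ⊆ interior X)
    (ν : EuclideanSpace ℝ (Fin (2 * n)) → EuclideanSpace ℝ (Fin (2 * n)))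
    (hν : ∀ z ∈ frontier X, ‖ν z‖ = 1 ∧ ∀ y ∈ X, ⟪y - z, ν z⟫ ≤ 0)
    (A B C D B' C' D' : EuclideanSpace ℝ (Fin (2 * n)))
    (h : IsSymplecticTraj4 n X ν A B C D) (h' : IsSymplecticTraj4 n X ν A B' C' D') :
    C = C' ∧ ((B = B' ∧ D = D') ∨ (B = D' ∧ D = B')) :=
  symplectic_billiard_four_periodic_unique_general n X hXstrict ν hν A B C D B' C' D' h h'
end

section
/- For a strictly convex planar body X with smooth boundary, there is a bijection between 3-periodic symplectic billiard trajectories of X and 3-periodic outer billiard trajectories of X: given a symplectic 3-periodic triangle ABC (each side parallel to the tangent line at the opposite vertex), the three tangent lines at A, B, C form a triangle A₁B₁C₁ whose sides are bisected by the tangency points A, B, C (an outer billiard 3-periodic trajectory), and conversely the midpoint triangle of any 3-periodic outer billiard trajectory is a 3-periodic symplectic billiard trajectory. -/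
/-- A 3-periodic symplectic billiard trajectory: a nondegenerate triangle `ABC` inscribed
in `∂X` such that the tangent line to `∂X` at each vertex is parallel to the opposite
side (the tangent line at `A` is the line through `A` with direction `C - B` meeting `X`
only at `A`, etc.). -/
def IsSymplecticTraj3 (X : Set (EuclideanSpace ℝ (Fin 2)))
    (A B C : EuclideanSpace ℝ (Fin 2)) : Prop :=
  ¬ Collinear ℝ ({A, B, C} : Set (EuclideanSpace ℝ (Fin 2))) ∧
    A ∈ frontier X ∧ B ∈ frontier X ∧ C ∈ frontier X ∧
    (affineSpan ℝ {A, A + (C - B)} : Set (EuclideanSpace ℝ (Fin 2))) ∩ X = {A} ∧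
    (affineSpan ℝ {B, B + (A - C)} : Set (EuclideanSpace ℝ (Fin 2))) ∩ X = {B} ∧
    (affineSpan ℝ {C, C + (B - A)} : Set (EuclideanSpace ℝ (Fin 2))) ∩ X = {C}

private lemma mid_eq (p q : EuclideanSpace ℝ (Fin 2)) :
    midpoint ℝ p q = (2:ℝ)⁻¹ • (p + q) := by
  rw [midpoint_eq_smul_add]; norm_num

private lemma span_pair_midpoint (p q : EuclideanSpace ℝ (Fin 2)) :
    (affineSpan ℝ ({midpoint ℝ p q, p} : Set (EuclideanSpace ℝ (Fin 2)))) =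
      affineSpan ℝ {p, q} := by
  apply le_antisymm
  · rw [affineSpan_le, Set.insert_subset_iff, Set.singleton_subset_iff]
    refine ⟨?_, left_mem_affineSpan_pair _ _ _⟩
    rw [midpoint]
    exact AffineMap.lineMap_mem_affineSpan_pair _ _ _
  · have h : AffineMap.lineMap (midpoint ℝ p q) p (-1 : ℝ) = q := by
      rw [AffineMap.lineMap_apply_module, mid_eq]; module
    have hq : q ∈ affineSpan ℝ ({midpoint ℝ p q, p} : Set (EuclideanSpace ℝ (Fin 2))) := by
      have hm := AffineMap.lineMap_mem_affineSpan_pair (-1:ℝ) (midpoint ℝ p q) p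
      rwa [h] at hm
    exact affineSpan_pair_le_of_mem_of_mem (right_mem_affineSpan_pair _ _ _) hq

private lemma sbtw_mem_open {x y z : EuclideanSpace ℝ (Fin 2)} (h : Sbtw ℝ x y z) :
    y ∈ openSegment ℝ x z := by
  have hm := h.wbtw.mem_segment
  rw [← insert_endpoints_openSegment] at hm
  rcases hm with rfl | rfl | hm
  · exact absurd rfl h.ne_left
  · exact absurd rfl h.ne_right
  · exact hm

private lemma not_collinear_frontier {X : Set (EuclideanSpace ℝ (Fin 2))}
    (hXstrict : ∀ p ∈ frontier X, ∀ q ∈ frontier X, p ≠ q →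
      openSegment ℝ p q ⊆ interior X)
    {A B C : EuclideanSpace ℝ (Fin 2)} (hA : A ∈ frontier X) (hB : B ∈ frontier X)
    (hC : C ∈ frontier X) (hAB : A ≠ B) (hAC : A ≠ C) (hBC : B ≠ C) :
    ¬ Collinear ℝ ({A, B, C} : Set (EuclideanSpace ℝ (Fin 2))) := by
  intro h
  have hni : ∀ p ∈ frontier X, p ∉ interior X := fun p hp hip =>
    disjoint_interior_frontier.ne_of_mem hip hp rfl
  rcases h.wbtw_or_wbtw_or_wbtw with hw | hw | hw
  · exact hni B hB (hXstrict A hA C hC hAC (sbtw_mem_open ⟨hw, hAB.symm, hBC⟩))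
  · exact hni C hC (hXstrict B hB A hA hAB.symm (sbtw_mem_open ⟨hw, hBC.symm, hAC.symm⟩))
  · exact hni A hA (hXstrict C hC B hB hBC.symm (sbtw_mem_open ⟨hw, hAC, hAB⟩))

private lemma ne_of_not_collinear {A B C : EuclideanSpace ℝ (Fin 2)}
    (h : ¬ Collinear ℝ ({A, B, C} : Set (EuclideanSpace ℝ (Fin 2)))) :
    A ≠ B ∧ A ≠ C ∧ B ≠ C := by
  refine ⟨?_, ?_, ?_⟩ <;> rintro rfl <;> apply h <;>
    [exact (collinear_pair ℝ A C).subset (by rintro x (rfl | rfl | rfl) <;> simp);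
     exact (collinear_pair ℝ A B).subset (by rintro x (rfl | rfl | rfl) <;> simp);
     exact (collinear_pair ℝ A B).subset (by rintro x (rfl | rfl | rfl) <;> simp)]

private lemma outer_to_symp {X : Set (EuclideanSpace ℝ (Fin 2))}
    (hXstrict : ∀ p ∈ frontier X, ∀ q ∈ frontier X, p ≠ q →
      openSegment ℝ p q ⊆ interior X)
    (y : Fin 3 → EuclideanSpace ℝ (Fin 2)) (hy : IsOuterTraj3 X y) :
    IsSymplecticTraj3 X (midpoint ℝ (y 1) (y 2)) (midpoint ℝ (y 2) (y 0))
      (midpoint ℝ (y 0) (y 1)) := by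
  obtain ⟨hinj, hside⟩ := hy
  have h0 := hside 0
  have h1 := hside 1
  have h2 := hside 2
  rw [show ((0:Fin 3)+1) = 1 from rfl] at h0
  rw [show ((1:Fin 3)+1) = 2 from rfl] at h1
  rw [show ((2:Fin 3)+1) = 0 from rfl] at h2
  set A := midpoint ℝ (y 1) (y 2) with hAdef
  set B := midpoint ℝ (y 2) (y 0) with hBdef
  set C := midpoint ℝ (y 0) (y 1) with hCdef
  -- distinctness of A, B, C
  have hAB : A ≠ B := by
    intro h
    rw [hAdef, hBdef, mid_eq, mid_eq] at h
    exact hinj.ne (show (1:Fin 3) ≠ 0 by decide)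
      (by linear_combination (norm := module) (2:ℝ) • h)
  have hAC : A ≠ C := by
    intro h
    rw [hAdef, hCdef, mid_eq, mid_eq] at h
    exact hinj.ne (show (2:Fin 3) ≠ 0 by decide)
      (by linear_combination (norm := module) (2:ℝ) • h)
  have hBC : B ≠ C := by
    intro h
    rw [hBdef, hCdef, mid_eq, mid_eq] at h
    exact hinj.ne (show (2:Fin 3) ≠ 1 by decide)
      (by linear_combination (norm := module) (2:ℝ) • h)
  refine ⟨not_collinear_frontier hXstrict h1.1 h2.1 h0.1 hAB hAC hBC,
    h1.1, h2.1, h0.1, ?_, ?_, ?_⟩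
  · have e1 : A + (C - B) = y 1 := by rw [hAdef, hBdef, hCdef, mid_eq, mid_eq, mid_eq]; module
    rw [e1, hAdef, span_pair_midpoint (y 1) (y 2)]
    exact h1.2
  · have e1 : B + (A - C) = y 2 := by rw [hAdef, hBdef, hCdef, mid_eq, mid_eq, mid_eq]; module
    rw [e1, hBdef, span_pair_midpoint (y 2) (y 0)]
    exact h2.2
  · have e1 : C + (B - A) = y 0 := by rw [hAdef, hBdef, hCdef, mid_eq, mid_eq, mid_eq]; module
    rw [e1, hCdef, span_pair_midpoint (y 0) (y 1)]
    exact h0.2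

private lemma symp_to_outer {X : Set (EuclideanSpace ℝ (Fin 2))}
    {A B C : EuclideanSpace ℝ (Fin 2)} (h : IsSymplecticTraj3 X A B C) :
    IsOuterTraj3 X ![B + C - A, A + C - B, A + B - C] := by
  obtain ⟨hncol, hA, hB, hC, hTA, hTB, hTC⟩ := h
  obtain ⟨hAB, hAC, hBC⟩ := ne_of_not_collinear hncol
  constructor
  · have d01 : B + C - A ≠ A + C - B := fun h =>
      hAB (by linear_combination (norm := module) (-2⁻¹:ℝ) • h)
    have d02 : B + C - A ≠ A + B - C := fun h =>
      hAC (by linear_combination (norm := module) (-2⁻¹:ℝ) • h)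
    have d12 : A + C - B ≠ A + B - C := fun h =>
      hBC (by linear_combination (norm := module) (-2⁻¹:ℝ) • h)
    intro i j hij
    fin_cases i <;> fin_cases j <;> first
      | rfl
      | exact absurd hij d01 | exact absurd hij d02 | exact absurd hij d12
      | exact absurd hij d01.symm | exact absurd hij d02.symm | exact absurd hij d12.symm
  · intro i
    fin_cases i
    · show SideTangentAtMidpoint X (B + C - A) (A + C - B)
      have e2 : midpoint ℝ (B + C - A) (A + C - B) = C := by rw [mid_eq]; module
      have e1 : C + (B - A) = B + C - A := by module
      constructor
      · rw [e2]; exact hC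
      · rw [← span_pair_midpoint (B + C - A) (A + C - B), e2, ← e1]
        exact hTC
    · show SideTangentAtMidpoint X (A + C - B) (A + B - C)
      have e2 : midpoint ℝ (A + C - B) (A + B - C) = A := by rw [mid_eq]; module
      have e1 : A + (C - B) = A + C - B := by module
      constructor
      · rw [e2]; exact hA
      · rw [← span_pair_midpoint (A + C - B) (A + B - C), e2, ← e1]
        exact hTA
    · show SideTangentAtMidpoint X (A + B - C) (B + C - A)
      have e2 : midpoint ℝ (A + B - C) (B + C - A) = B := by rw [mid_eq]; module
      have e1 : B + (A - C) = A + B - C := by module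
      constructor
      · rw [e2]; exact hB
      · rw [← span_pair_midpoint (A + B - C) (B + C - A), e2, ← e1]
        exact hTB

/-- For a strictly convex smooth planar body, `ABC` is a 3-periodic symplectic billiard
trajectory iff the triangle `A₁B₁C₁` formed by the tangent lines at `A`, `B`, `C`
(with `A₁ = -A+B+C`, `B₁ = A-B+C`, `C₁ = A+B-C`, so that `A, B, C` are the midpoints of
its sides) is a 3-periodic outer billiard trajectory; conversely the midpoint triangle of
any 3-periodic outer billiard trajectory is a 3-periodic symplectic billiard trajectory. -/
theorem symplectic_outer_three_periodic_correspondence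
    (X : Set (EuclideanSpace ℝ (Fin 2)))
    (hXconv : Convex ℝ X) (hXcomp : IsCompact X) (hXint : (interior X).Nonempty)
    (hXstrict : ∀ p ∈ frontier X, ∀ q ∈ frontier X, p ≠ q →
      openSegment ℝ p q ⊆ interior X) :
    (∀ A B C : EuclideanSpace ℝ (Fin 2),
      IsSymplecticTraj3 X A B C ↔
        IsOuterTraj3 X ![B + C - A, A + C - B, A + B - C]) ∧
    (∀ y : Fin 3 → EuclideanSpace ℝ (Fin 2), IsOuterTraj3 X y →
      IsSymplecticTraj3 X (midpoint ℝ (y 1) (y 2)) (midpoint ℝ (y 2) (y 0))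
        (midpoint ℝ (y 0) (y 1))) := by
  refine ⟨fun A B C => ⟨symp_to_outer, fun h => ?_⟩, fun y hy => outer_to_symp hXstrict y hy⟩
  have := outer_to_symp hXstrict _ h
  have e0 : (![B + C - A, A + C - B, A + B - C] : Fin 3 → EuclideanSpace ℝ (Fin 2)) 0
      = B + C - A := rfl
  have e1 : (![B + C - A, A + C - B, A + B - C] : Fin 3 → EuclideanSpace ℝ (Fin 2)) 1
      = A + C - B := rfl
  have e2 : (![B + C - A, A + C - B, A + B - C] : Fin 3 → EuclideanSpace ℝ (Fin 2)) 2
      = A + B - C := rfl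
  rw [e0, e1, e2] at this
  have m1 : midpoint ℝ (A + C - B) (A + B - C) = A := by rw [mid_eq]; module
  have m2 : midpoint ℝ (A + B - C) (B + C - A) = B := by rw [mid_eq]; module
  have m3 : midpoint ℝ (B + C - A) (A + C - B) = C := by rw [mid_eq]; module
  rwa [m1, m2, m3] at this
end

section
/- If M ∈ SL(2,ℝ) is a product M = R(αₙ)Aₙ ⋯ R(α₁)A₁ of rotations R(αᵢ) with 0 < αᵢ < π and shears Aᵢ = [[1,sᵢ],[0,1]] with sᵢ > 0, and Σαᵢ ≤ 2π with n ≥ 2, then M does not fix the ray spanned by (1,0)ᵀ; in particular M ≠ Id. -/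
open Real Matrix

/-- Shear matrix with parameter `s`. -/
def shearMat (s : ℝ) : Matrix (Fin 2) (Fin 2) ℝ := !![1, s; 0, 1]

/-
Follow the polar angle of the image of `(1, 0)` under the partial products. A rotation `R(α)`
adds `α` to it, while a shear with `s > 0` never increases a nonnegative angle, keeps it
nonnegative, and strictly decreases it off the real axis. Hence after `k ≥ 1` factors the angle
lies in `(0, α₁ + ⋯ + αₖ]`, and it can only equal that partial sum while the sum is below `π`:
otherwise some shear acted on a vector off the real axis. The final angle is therefore in
`(0, 2π)`, so the image is not a positive multiple of `(1, 0)`.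
-/

def HasPolarAngle (v : Fin 2 → ℝ) (θ : ℝ) : Prop :=
  ∃ r : ℝ, 0 < r ∧ v = ![r * cos θ, r * sin θ]

lemma hasPolarAngle_one_zero : HasPolarAngle ![1, 0] 0 :=
  ⟨1, one_pos, by simp⟩

lemma exists_hasPolarAngle_of_neg {v : Fin 2 → ℝ} (hv : v 1 < 0) :
    ∃ δ, HasPolarAngle v δ ∧ -π < δ ∧ δ < 0 := by
  set z : ℂ := ⟨v 0, v 1⟩
  have hz : z ≠ 0 := fun h => hv.ne (congrArg Complex.im h)
  refine ⟨z.arg, ⟨‖z‖, norm_pos_iff.2 hz, ?_⟩, z.neg_pi_lt_arg, Complex.arg_neg_iff.2 hv⟩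
  ext i; fin_cases i
  · exact (Complex.norm_mul_cos_arg z).symm
  · exact (Complex.norm_mul_sin_arg z).symm

lemma rotMat_mulVec (α x y : ℝ) :
    rotMat α *ᵥ ![x, y] = ![x * cos α - y * sin α, x * sin α + y * cos α] := by
  ext i; fin_cases i <;> simp [rotMat, sub_eq_add_neg]

lemma shearMat_mulVec (s x y : ℝ) : shearMat s *ᵥ ![x, y] = ![x + y * s, y] := by
  ext i; fin_cases i <;> simp [shearMat]

lemma HasPolarAngle.rotMat_mulVec {v : Fin 2 → ℝ} {θ : ℝ} (hv : HasPolarAngle v θ) (α : ℝ) :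
    HasPolarAngle (rotMat α *ᵥ v) (θ + α) := by
  obtain ⟨r, hr, rfl⟩ := hv
  refine ⟨r, hr, ?_⟩
  rw [_root_.rotMat_mulVec, cos_add, sin_add]
  exact vec2_eq (by ring) (by ring)

lemma HasPolarAngle.shearMat_mulVec {v : Fin 2 → ℝ} {θ s : ℝ} (hv : HasPolarAngle v θ)
    (hθ : 0 ≤ θ) (hs : 0 < s) :
    ∃ θ', HasPolarAngle (shearMat s *ᵥ v) θ' ∧ 0 ≤ θ' ∧ θ' ≤ θ ∧ (sin θ ≠ 0 → θ' < θ) := by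
  obtain ⟨r, hr, rfl⟩ := hv
  rw [_root_.shearMat_mulVec]
  by_cases hsin : sin θ = 0
  · refine ⟨θ, ⟨r, hr, ?_⟩, hθ, le_rfl, fun h => absurd hsin h⟩
    simp [hsin]
  -- As complex numbers, `shear v / v = 1 + s sin θ e^{-iθ}` has negative imaginary part;
  -- its argument `δ ∈ (-π, 0)` is the change of angle.
  obtain ⟨δ, ⟨ρ, hρ, hu⟩, hδπ, hδ0⟩ :=
    exists_hasPolarAngle_of_neg (v := ![1 + s * sin θ * cos θ, -(s * sin θ ^ 2)])
      (neg_lt_zero.2 (by positivity))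
  have hre : ρ * cos δ = 1 + s * sin θ * cos θ := by simpa using (congrFun hu 0).symm
  have him : ρ * sin δ = -(s * sin θ ^ 2) := by simpa using (congrFun hu 1).symm
  have hsin' : ρ * sin (θ + δ) = sin θ := by
    rw [sin_add]; linear_combination cos θ * him + sin θ * hre
  refine ⟨θ + δ, ⟨r * ρ, mul_pos hr hρ, vec2_eq ?_ ?_⟩, ?_, by linarith, fun _ => by linarith⟩
  · rw [cos_add]
    linear_combination (-r * cos θ) * hre + (r * sin θ) * him - r * s * sin θ * sin_sq_add_cos_sq θ
  · linear_combination (-r) * hsin'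
  · rcases le_or_gt π θ with hπ | hπ
    · linarith
    have hθ0 : 0 < θ := lt_of_le_of_ne hθ fun h => hsin (h ▸ sin_zero)
    have : 0 < sin (θ + δ) := pos_of_mul_pos_right (hsin' ▸ sin_pos_of_pos_of_lt_pi hθ0 hπ) hρ.le
    by_contra! h
    linarith [sin_nonpos_of_nonpos_of_neg_pi_le h.le (by linarith)]

lemma HasPolarAngle.rotMat_mul_shearMat_mulVec {v : Fin 2 → ℝ} {θ B α s : ℝ}
    (hv : HasPolarAngle v θ) (hθ : 0 ≤ θ) (hθB : θ ≤ B) (hθπ : θ < π ∨ θ < B)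
    (hα : 0 < α) (hαπ : α < π) (hs : 0 < s) :
    ∃ θ', HasPolarAngle ((rotMat α * shearMat s) *ᵥ v) θ' ∧
      0 < θ' ∧ θ' ≤ B + α ∧ (θ' < π ∨ θ' < B + α) := by
  obtain ⟨θ', hv', hθ'0, hθ'θ, hθ'lt⟩ := hv.shearMat_mulVec hθ hs
  refine ⟨θ' + α, ?_, by linarith, by linarith, ?_⟩
  · rw [← mulVec_mulVec]
    exact hv'.rotMat_mulVec α
  rcases hθ'θ.lt_or_eq with h | rfl
  · right; linarith
  rcases hθπ with hπ | hB
  · obtain rfl : θ' = 0 := by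
      by_contra h0
      exact lt_irrefl θ'
        (hθ'lt (sin_pos_of_pos_of_lt_pi (lt_of_le_of_ne hθ (Ne.symm h0)) hπ).ne')
    left; linarith
  · right; linarith

lemma HasPolarAngle.not_exists_pos_smul_eq {v : Fin 2 → ℝ} {θ : ℝ} (hv : HasPolarAngle v θ)
    (hθ0 : 0 < θ) (hθ : θ < 2 * π) : ¬ ∃ t : ℝ, 0 < t ∧ v = t • ![1, 0] := by
  rintro ⟨t, ht, rfl⟩
  obtain ⟨r, hr, hv⟩ := hv
  have hcos : r * cos θ = t := by simpa using (congrFun hv 0).symm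
  have hsin : r * sin θ = 0 := by simpa using (congrFun hv 1).symm
  have hcos1 : cos θ = 1 := by
    have hsin0 : sin θ = 0 := (mul_eq_zero.1 hsin).resolve_left hr.ne'
    have hcos_pos : 0 < cos θ := pos_of_mul_pos_right (hcos ▸ ht) hr.le
    nlinarith [sin_sq_add_cos_sq θ]
  linarith [(cos_eq_one_iff_of_lt_of_lt (by linarith) hθ).1 hcos1]

lemma prod_reverse_ofFn_succ {M : Type*} [Monoid M] {n : ℕ} (f : Fin (n + 1) → M) :
    (List.ofFn f).reverse.prod =
      f (Fin.last n) * (List.ofFn fun i => f i.castSucc).reverse.prod := by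
  rw [List.ofFn_succ', List.concat_eq_append, List.reverse_append, List.reverse_singleton,
    List.prod_append, List.prod_singleton]

lemma exists_hasPolarAngle_prod (n : ℕ) (α s : Fin (n + 1) → ℝ)
    (hα : ∀ i, 0 < α i ∧ α i < π) (hs : ∀ i, 0 < s i) :
    ∃ θ, HasPolarAngle
        ((List.ofFn fun i => rotMat (α i) * shearMat (s i)).reverse.prod *ᵥ ![1, 0]) θ ∧
      0 < θ ∧ θ ≤ ∑ i, α i ∧ (θ < π ∨ θ < ∑ i, α i) := by
  induction n with
  | zero =>
    simpa using hasPolarAngle_one_zero.rotMat_mul_shearMat_mulVec le_rfl le_rfl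
      (Or.inl pi_pos) (hα 0).1 (hα 0).2 (hs 0)
  | succ n ih =>
    obtain ⟨θ, hv, hθ0, hθB, hθπ⟩ :=
      ih (fun i => α i.castSucc) (fun i => s i.castSucc) (fun i => hα _) (fun i => hs _)
    rw [prod_reverse_ofFn_succ, ← mulVec_mulVec, Fin.sum_univ_castSucc]
    exact hv.rotMat_mul_shearMat_mulVec hθ0.le hθB hθπ (hα _).1 (hα _).2 (hs _)

/-- If `M = R(αₙ)Aₙ ⋯ R(α₁)A₁` with `0 < αᵢ < π`, `sᵢ > 0`, `n ≥ 2` and `∑ αᵢ ≤ 2π`,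
then `M` does not fix the ray spanned by `(1,0)ᵀ`; in particular `M ≠ Id`. -/
theorem shear_rotation_product_not_fix_ray {n : ℕ} (hn : 2 ≤ n) (α s : Fin n → ℝ)
    (hα : ∀ i, 0 < α i ∧ α i < Real.pi) (hs : ∀ i, 0 < s i)
    (M : Matrix (Fin 2) (Fin 2) ℝ)
    (hM : M = (List.ofFn (fun i : Fin n => rotMat (α i) * shearMat (s i))).reverse.prod)
    (hsum : ∑ i, α i ≤ 2 * Real.pi) :
    (¬ ∃ t : ℝ, 0 < t ∧ M.mulVec ![1, 0] = t • ![1, 0]) ∧ M ≠ 1 := by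
  obtain ⟨m, rfl⟩ : ∃ m, n = m + 1 := ⟨n - 1, by omega⟩
  obtain ⟨θ, hv, hθ0, hθB, hθπ⟩ := exists_hasPolarAngle_prod m α s hα hs
  have hθ : θ < 2 * π := by rcases hθπ with h | h <;> linarith [pi_pos]
  have hray := hM ▸ hv.not_exists_pos_smul_eq hθ0 hθ
  refine ⟨hray, fun h1 => hray ⟨1, one_pos, ?_⟩⟩
  rw [h1, one_mulVec, one_smul]
end
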